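/- arXiv:2301.04431 — 4 statements merged into one kernel-verified Lean document; each statement's English description precedes it below -/
import Mathlib

section
/- Consider the composite problem minimize φ = f + g under the standing assumptions, and let x^{k+1} = prox_{γ_{k+1} g}(x^k − γ_{k+1}∇f(x^k)) for a sequence of strictly positive stepsizes γ_k. Then for every k ≥ 1 and every x* ∈ argmin φ, with ρ_{k+1} = γ_{k+1}/γ_k and P_k = φ(x^k) − min φ: ½‖x^{k+1} − x*‖² + γ_{k+1}(1 + ρ_{k+1})P_k + ¼‖x^k − x^{k+1}‖² ≤ ½‖x^k − x*‖² + ρ_{k+1}γ_{k+1}P_{k-1} − ρ_{k+1}² γ_k ℓ_k (1 − γ_k c_k) ‖x^{k-1} − x^k‖². -/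
open scoped RealInnerProductSpace
open Filter

noncomputable section

/-- Euclidean space `ℝⁿ`. -/
abbrev En (n : ℕ) := EuclideanSpace ℝ (Fin n)

/-- Local Lipschitz-type estimate `ℓ = ⟨∇f(a) − ∇f(b), a − b⟩ / ‖a − b‖²`
(Lean's division by zero implements the `0/0 = 0` convention). -/
noncomputable def lEst {n : ℕ} (f' : En n → En n) (a b : En n) : ℝ :=
  ⟪f' a - f' b, a - b⟫ / ‖a - b‖ ^ 2

/-- Local (inverse) cocoercivity estimate `c = ‖∇f(a) − ∇f(b)‖² / ⟨∇f(a) − ∇f(b), a − b⟩`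
(convention `0/0 = 0`). -/
noncomputable def cEst {n : ℕ} (f' : En n → En n) (a b : En n) : ℝ :=
  ‖f' a - f' b‖ ^ 2 / ⟪f' a - f' b, a - b⟫

/-- `δ = γ ℓ (γ c − 1)`. -/
noncomputable def deltaEst {n : ℕ} (γ : ℝ) (f' : En n → En n) (a b : En n) : ℝ :=
  γ * lEst f' a b * (γ * cEst f' a b - 1)

/-- `g` is proper, lower semicontinuous and convex (extended-real-valued). -/
def ProperLscConvex {n : ℕ} (g : En n → EReal) : Prop :=
  (∀ x, g x ≠ ⊥) ∧ (∃ x, g x ≠ ⊤) ∧ LowerSemicontinuous g ∧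
    ∀ x y : En n, ∀ a b : ℝ, 0 ≤ a → 0 ≤ b → a + b = 1 →
      g (a • x + b • y) ≤ (a : EReal) * g x + (b : EReal) * g y

/-- `p = prox_{γ g}(u)`, characterized as minimality of `w ↦ g w + ‖w − u‖²/(2γ)`. -/
def IsProx {n : ℕ} (γ : ℝ) (g : En n → EReal) (u p : En n) : Prop :=
  ∀ w, g p + ((‖p - u‖ ^ 2 / (2 * γ) : ℝ) : EReal) ≤ g w + ((‖w - u‖ ^ 2 / (2 * γ) : ℝ) : EReal)

/-- Real value of `φ = f + g` (equals `f z + g z` whenever `g z` is finite). -/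
noncomputable def phiR {n : ℕ} (f : En n → ℝ) (g : En n → EReal) (z : En n) : ℝ :=
  f z + (g z).toReal

/-- `P = φ(z) − φ(x*)` (real-valued). -/
noncomputable def Pval {n : ℕ} (f : En n → ℝ) (g : En n → EReal) (xs z : En n) : ℝ :=
  phiR f g z - phiR f g xs

/-- adaPGM stepsize factor: `min{√(1+ρ), 1/(2√([δ]₊))}` with the convention `1/0 = +∞`
(so the second term is inactive when `[δ]₊ = 0`). -/
noncomputable def adaStep (ρ δ : ℝ) : ℝ :=
  if δ ≤ 0 then Real.sqrt (1 + ρ) else min (Real.sqrt (1 + ρ)) (1 / (2 * Real.sqrt δ))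

/-- Malitsky–Mishchenko stepsize: `min{γ√(1+γ/γ'), 1/(2L)}` with the convention `1/0 = +∞`. -/
noncomputable def mmStep (γprev γ L : ℝ) : ℝ :=
  if L = 0 then γ * Real.sqrt (1 + γ / γprev)
  else min (γ * Real.sqrt (1 + γ / γprev)) (1 / (2 * L))

/-- Lyapunov function `U_k = ½‖x^k − x*‖² + ¼‖x^k − x^{k-1}‖² + γ_k(1+ρ_k)P_{k-1}`,
with the Lean index shifted by one (Lean `x (k+1)` is the paper `x^k`). -/
noncomputable def Ufun {n : ℕ} (f : En n → ℝ) (g : En n → EReal) (xs : En n)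
    (x : ℕ → En n) (γ : ℕ → ℝ) (k : ℕ) : ℝ :=
  1/2 * ‖x (k+1) - xs‖ ^ 2 + 1/4 * ‖x (k+1) - x k‖ ^ 2
    + γ (k+1) * (1 + γ (k+1) / γ k) * Pval f g xs (x k)

/-!
Write `a, b, c` for `x^{k-1}, x^k, x^{k+1}` and `σ = γ_k`, `γ_{k+1} = ρ σ`. Only two inequalities
enter: the variational inequality of a proximal step, `γ (g p - g w) ≤ ⟪p - u, w - p⟫`, and the
gradient inequality of the convex function `f`. The step producing `c`, tested at `x*`, plus `ρ`
times the step producing `b`, tested at `c`, plus the gradient inequality at `b` bound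
`γ_{k+1} P_k` up to a cross term `ρ ⟪v, b - c⟫` with `v = a - b - σ (∇f a - ∇f b)`; the step
producing `b`, tested at `a`, and the gradient inequality at `b` again bound `P_k - P_{k-1}`. Young's inequality absorbs the cross term
into `¼ ‖b - c‖²` and `ρ² ‖v‖²`, and expanding `‖v‖²` yields the `ℓ_k (1 - γ_k c_k)` term. The
convention `0/0 = 0` is harmless because `⟪∇f a - ∇f b, a - b⟫ = 0` forces `∇f a = ∇f b` for
convex `f`.
-/

open Set Topology

section ConvexGradient

variable {E : Type*} [NormedAddCommGroup E] [InnerProductSpace ℝ E] [CompleteSpace E]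
  {f : E → ℝ} {a b v w : E}

theorem ConvexOn.add_inner_gradient_le (hf : ConvexOn ℝ univ f) (hv : HasGradientAt f v a)
    (x : E) : f a + ⟪v, x - a⟫ ≤ f x := by
  let line : ℝ →ᵃ[ℝ] E := AffineMap.lineMap a x
  have hderiv : HasDerivAt (f ∘ line) ⟪v, x - a⟫ 0 := by
    rw [← AffineMap.lineMap_apply_zero (k := ℝ) a x] at hv
    simpa using hv.hasFDerivAt.comp_hasDerivAt (0 : ℝ) AffineMap.hasDerivAt_lineMap
  have := (hf.comp_affineMap line).le_slope_of_hasDerivAt (mem_univ 0) (mem_univ 1) zero_lt_one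
    hderiv
  simp only [slope_def_field, Function.comp_apply, line, AffineMap.lineMap_apply_one,
    AffineMap.lineMap_apply_zero, sub_zero, div_one] at this
  linarith

theorem HasGradientAt.eq_of_forall_add_inner_le (hv : HasGradientAt f v a)
    (hw : ∀ x, f a + ⟪w, x - a⟫ ≤ f x) : w = v := by
  have hmin : IsLocalMin (fun x => f x - ⟪w, x⟫) a :=
    Eventually.of_forall fun x => by linarith [hw x, inner_sub_right (𝕜 := ℝ) w x a]
  have hzero := hmin.hasFDerivAt_eq_zero (hv.hasFDerivAt.sub (innerSL ℝ w).hasFDerivAt)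
  have := congrArg (· (v - w)) hzero
  simp only [sub_apply, InnerProductSpace.toDual_apply_apply, innerSL_apply_apply,
    zero_apply, ← inner_sub_left, inner_self_eq_zero] at this
  exact (sub_eq_zero.mp this).symm

/-- Both first-order inequalities along the segment `[a, b]` are then equalities, so `w` is a
subgradient of `f` at `a`. -/
theorem ConvexOn.gradient_eq_of_inner_sub_eq_zero (hf : ConvexOn ℝ univ f)
    (hv : HasGradientAt f v a) (hw : HasGradientAt f w b) (h : ⟪v - w, a - b⟫ = 0) : v = w := by
  have hab := hf.add_inner_gradient_le hv b
  have hba := hf.add_inner_gradient_le hw a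
  refine (hv.eq_of_forall_add_inner_le fun x => ?_).symm
  have hx := hf.add_inner_gradient_le hw x
  have hsplit : ⟪w, x - b⟫ = ⟪w, x - a⟫ + ⟪w, a - b⟫ := by
    rw [← inner_add_right, sub_add_sub_cancel]
  rw [inner_sub_left] at h
  have : ⟪v, b - a⟫ = -⟪v, a - b⟫ := by rw [← inner_neg_right, neg_sub]
  linarith

end ConvexGradient

section ProximalGradient

variable {n : ℕ} {f : En n → ℝ} {f' : En n → En n} {g : En n → EReal}

theorem lEst_mul_one_sub_mul_cEst_mul_norm_sq (hf : ConvexOn ℝ univ f)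
    (hgrad : ∀ z, HasGradientAt f (f' z) z) (σ : ℝ) (a b : En n) :
    lEst f' a b * (1 - σ * cEst f' a b) * ‖a - b‖ ^ 2
      = ⟪f' a - f' b, a - b⟫ - σ * ‖f' a - f' b‖ ^ 2 := by
  by_cases hD : ⟪f' a - f' b, a - b⟫ = 0
  · have hab := hf.gradient_eq_of_inner_sub_eq_zero (hgrad a) (hgrad b) hD
    simp [lEst, cEst, hab]
  · have hd : ‖a - b‖ ≠ 0 := by
      rintro hd
      simp_all
    unfold lEst cEst
    field_simp

theorem IsProx.ne_top (hg : ProperLscConvex g) {γ : ℝ} {u p : En n} (hp : IsProx γ g u p) :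
    g p ≠ ⊤ := by
  obtain ⟨w, hw⟩ := hg.2.1
  intro hp_top
  have := hp w
  rw [hp_top, EReal.top_add_of_ne_bot (EReal.coe_ne_bot _), top_le_iff,
    ← EReal.coe_toReal hw (hg.1 w), ← EReal.coe_add] at this
  exact EReal.coe_ne_top _ this

/-- Compare `p` with the points `p + t • (w - p)` of the segment towards `w`, and let `t → 0⁺`. -/
theorem IsProx.mul_sub_le_inner (hg : ProperLscConvex g) {γ : ℝ} (hγ : 0 < γ) {u p : En n}
    (hp : IsProx γ g u p) {w : En n} (hw : g w ≠ ⊤) :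
    γ * ((g p).toReal - (g w).toReal) ≤ ⟪p - u, w - p⟫ := by
  set gp := (g p).toReal
  set gw := (g w).toReal
  have hgp : g p = gp := (EReal.coe_toReal (hp.ne_top hg) (hg.1 p)).symm
  have hgw : g w = gw := (EReal.coe_toReal hw (hg.1 w)).symm
  have along_segment : ∀ t ∈ Ioc (0 : ℝ) 1,
      γ * (gp - gw) ≤ ⟪p - u, w - p⟫ + t * (‖w - p‖ ^ 2 / 2) := by
    rintro t ⟨ht0, ht1⟩
    have hconv : g (t • w + (1 - t) • p) ≤ ((t * gw + (1 - t) * gp : ℝ) : EReal) := by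
      have := hg.2.2.2 w p t (1 - t) ht0.le (by linarith) (by ring)
      rwa [hgw, hgp, ← EReal.coe_mul, ← EReal.coe_mul, ← EReal.coe_add] at this
    have hmin := (hp (t • w + (1 - t) • p)).trans (add_le_add_left hconv _)
    rw [hgp, ← EReal.coe_add, ← EReal.coe_add, EReal.coe_le_coe_iff,
      show t • w + (1 - t) • p - u = (p - u) + t • (w - p) by module, norm_add_sq_real,
      norm_smul, real_inner_smul_right, Real.norm_of_nonneg ht0.le] at hmin
    rw [show (‖p - u‖ ^ 2 + 2 * (t * ⟪p - u, w - p⟫) + (t * ‖w - p‖) ^ 2) / (2 * γ)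
        = ‖p - u‖ ^ 2 / (2 * γ) + t * (⟪p - u, w - p⟫ + t * (‖w - p‖ ^ 2 / 2)) / γ by
      field_simp; ring] at hmin
    have hscaled : t * (gp - gw) ≤ t * (⟪p - u, w - p⟫ + t * (‖w - p‖ ^ 2 / 2)) / γ := by
      linarith
    rw [le_div_iff₀ hγ] at hscaled
    exact le_of_mul_le_mul_left (by linarith) ht0
  have hlim : Tendsto (fun t : ℝ => ⟪p - u, w - p⟫ + t * (‖w - p‖ ^ 2 / 2)) (𝓝[>] 0)
      (𝓝 ⟪p - u, w - p⟫) :=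
    tendsto_nhdsWithin_of_tendsto_nhds ((by fun_prop : Continuous _).tendsto' 0 _ (by simp))
  exact ge_of_tendsto hlim (eventually_of_mem (Ioc_mem_nhdsGT zero_lt_one) along_segment)

theorem descent_inequality_of_finite (hf : ConvexOn ℝ univ f)
    (hgrad : ∀ z, HasGradientAt f (f' z) z) (hg : ProperLscConvex g) {σ γ : ℝ} (hσ : 0 < σ)
    (hγ : 0 < γ) {a b c xs : En n} (hb : IsProx σ g (a - σ • f' a) b)
    (hc : IsProx γ g (b - γ • f' b) c) (ha : g a ≠ ⊤) (hxs : g xs ≠ ⊤) :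
    1/2 * ‖c - xs‖ ^ 2 + 1/4 * ‖b - c‖ ^ 2 + γ * (1 + γ / σ) * Pval f g xs b
      ≤ 1/2 * ‖b - xs‖ ^ 2
          - (γ / σ) ^ 2 * σ * lEst f' a b * (1 - σ * cEst f' a b) * ‖a - b‖ ^ 2
          + γ / σ * γ * Pval f g xs a := by
  obtain ⟨ρ, hρ, rfl⟩ : ∃ ρ, 0 < ρ ∧ γ = ρ * σ := ⟨γ / σ, div_pos hγ hσ, by field_simp⟩
  rw [mul_div_cancel_right₀ ρ hσ.ne']
  set v := (a - b) - σ • (f' a - f' b)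
  have descent_b : ρ * σ * Pval f g xs b
      ≤ 1/2 * ‖b - xs‖ ^ 2 - 1/2 * ‖c - xs‖ ^ 2 - 1/2 * ‖b - c‖ ^ 2 + ρ * ⟪v, b - c⟫ := by
    have H1 := hc.mul_sub_le_inner hg hγ hxs
    have H2 := hb.mul_sub_le_inner hg hσ (hc.ne_top hg)
    have F1 := hf.add_inner_gradient_le (hgrad b) xs
    simp only [Pval, phiR, v, ← real_inner_self_eq_norm_sq, inner_sub_left, inner_sub_right,
      real_inner_smul_right, real_inner_comm] at H1 H2 F1 ⊢
    linear_combination H1 + ρ * H2 + ρ * σ * F1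
  have increase_a : σ * (Pval f g xs b - Pval f g xs a)
      ≤ σ * ⟪f' a - f' b, a - b⟫ - ‖a - b‖ ^ 2 := by
    have H3 := hb.mul_sub_le_inner hg hσ ha
    have F2 := hf.add_inner_gradient_le (hgrad b) a
    simp only [Pval, phiR, ← real_inner_self_eq_norm_sq, inner_sub_left, inner_sub_right,
      real_inner_smul_right, real_inner_comm] at H3 F2 ⊢
    linear_combination H3 + σ * F2
  have young : ρ * ⟪v, b - c⟫ ≤ ρ ^ 2 * ‖v‖ ^ 2 + 1/4 * ‖b - c‖ ^ 2 := by
    have := norm_sub_sq_real (ρ • v) ((1/2 : ℝ) • (b - c))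
    rw [norm_smul, norm_smul, real_inner_smul_left, real_inner_smul_right,
      Real.norm_of_nonneg hρ.le, Real.norm_of_nonneg (by norm_num)] at this
    linear_combination sq_nonneg ‖ρ • v - (1/2 : ℝ) • (b - c)‖ + this
  have norm_v : ‖v‖ ^ 2
      = ‖a - b‖ ^ 2 - 2 * σ * ⟪f' a - f' b, a - b⟫ + σ ^ 2 * ‖f' a - f' b‖ ^ 2 := by
    rw [norm_sub_sq_real, norm_smul, real_inner_smul_right, Real.norm_of_nonneg hσ.le,
      real_inner_comm]
    ring
  rw [mul_assoc _ (lEst f' a b), mul_assoc _ (lEst f' a b * _),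
    lEst_mul_one_sub_mul_cEst_mul_norm_sq hf hgrad]
  linear_combination descent_b + ρ ^ 2 * increase_a + young + ρ ^ 2 * norm_v

theorem coe_Pval (hbot : ∀ z, g z ≠ ⊥) {xs z : En n} (hz : g z ≠ ⊤) (hxs : g xs ≠ ⊤) :
    ((Pval f g xs z : ℝ) : EReal) = (f z : EReal) + g z - ((f xs : EReal) + g xs) := by
  rw [Pval, phiR, phiR, EReal.coe_sub, EReal.coe_add, EReal.coe_add,
    EReal.coe_toReal hz (hbot z), EReal.coe_toReal hxs (hbot xs)]

end ProximalGradient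

theorem PGM_descent_inequality_general {n : ℕ}
    (f : En n → ℝ) (f' : En n → En n) (g : En n → EReal)
    (hconv : ConvexOn ℝ Set.univ f)
    (hgrad : ∀ z, HasGradientAt f (f' z) z)
    (hg : ProperLscConvex g)
    (γ : ℕ → ℝ) (hγpos : ∀ k, 0 < γ k)
    (x : ℕ → En n)
    (hstep : ∀ k, IsProx (γ (k+1)) g (x k - γ (k+1) • f' (x k)) (x (k+1)))
    (xs : En n)
    (k : ℕ) (hk : 1 ≤ k) :
    ((1/2 * ‖x (k+1) - xs‖ ^ 2 + 1/4 * ‖x k - x (k+1)‖ ^ 2 : ℝ) : EReal)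
        + ((γ (k+1) * (1 + γ (k+1) / γ k) : ℝ) : EReal)
            * (((f (x k) : EReal) + g (x k)) - ((f xs : EReal) + g xs))
      ≤ ((1/2 * ‖x k - xs‖ ^ 2
            - (γ (k+1) / γ k) ^ 2 * γ k * lEst f' (x (k-1)) (x k)
              * (1 - γ k * cEst f' (x (k-1)) (x k)) * ‖x (k-1) - x k‖ ^ 2 : ℝ) : EReal)
        + ((γ (k+1) / γ k * γ (k+1) : ℝ) : EReal)
            * (((f (x (k-1)) : EReal) + g (x (k-1))) - ((f xs : EReal) + g xs)) := by
  obtain ⟨j, rfl⟩ : ∃ j, k = j + 1 := ⟨k - 1, by omega⟩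
  rw [Nat.add_sub_cancel]
  have hb := hstep j
  have hc := hstep (j + 1)
  have hσ := hγpos (j + 1)
  have hγ := hγpos (j + 1 + 1)
  by_cases hxs : g xs = ⊤
  · rw [hxs, EReal.coe_add_top, EReal.sub_top, EReal.coe_mul_bot_of_pos, EReal.add_bot]
    · exact bot_le
    · positivity
  by_cases ha : g (x j) = ⊤
  · rw [ha, EReal.coe_add_top, ← EReal.coe_toReal hxs (hg.1 xs), ← EReal.coe_add,
      EReal.top_sub_coe, EReal.coe_mul_top_of_pos, EReal.coe_add_top]
    · exact le_top
    · positivity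
  rw [← coe_Pval hg.1 (hb.ne_top hg) hxs, ← coe_Pval hg.1 ha hxs]
  exact_mod_cast descent_inequality_of_finite hconv hgrad hg hσ hγ hb hc ha hxs

/-- descent inequality for the proximal gradient method
(Lemma "thm:PG:descent"), stated with extended-real-valued `φ = f + g`. -/
theorem PGM_descent_inequality {n : ℕ}
    (f : En n → ℝ) (f' : En n → En n) (g : En n → EReal)
    (hconv : ConvexOn ℝ Set.univ f)
    (hgrad : ∀ z, HasGradientAt f (f' z) z)
    (hlip : LocallyLipschitz f')
    (hg : ProperLscConvex g)
    (γ : ℕ → ℝ) (hγpos : ∀ k, 0 < γ k)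
    (x : ℕ → En n)
    (hstep : ∀ k, IsProx (γ (k+1)) g (x k - γ (k+1) • f' (x k)) (x (k+1)))
    (xs : En n) (hxs : ∀ w, (f xs : EReal) + g xs ≤ (f w : EReal) + g w)
    (k : ℕ) (hk : 1 ≤ k) :
    ((1/2 * ‖x (k+1) - xs‖ ^ 2 + 1/4 * ‖x k - x (k+1)‖ ^ 2 : ℝ) : EReal)
        + ((γ (k+1) * (1 + γ (k+1) / γ k) : ℝ) : EReal)
            * (((f (x k) : EReal) + g (x k)) - ((f xs : EReal) + g xs))
      ≤ ((1/2 * ‖x k - xs‖ ^ 2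
            - (γ (k+1) / γ k) ^ 2 * γ k * lEst f' (x (k-1)) (x k)
              * (1 - γ k * cEst f' (x (k-1)) (x k)) * ‖x (k-1) - x k‖ ^ 2 : ℝ) : EReal)
        + ((γ (k+1) / γ k * γ (k+1) : ℝ) : EReal)
            * (((f (x (k-1)) : EReal) + g (x (k-1))) - ((f xs : EReal) + g xs)) :=
  PGM_descent_inequality_general f f' g hconv hgrad hg γ hγpos x hstep xs k hk
end
end

section
/- Consider the composite problem minimize φ = f + g under the standing assumptions, and let the iterates be generated by adaPGM. Then for every k ≥ 1 and every x* ∈ argmin φ, with U_k = ½‖x^k − x*‖² + ¼‖x^k − x^{k-1}‖² + γ_k(1 + ρ_k)P_{k-1}: U_{k+1} ≤ U_k − (¼ − ρ_{k+1}²δ_k)‖x^{k-1} − x^k‖² − γ_k(1 + ρ_k − ρ_{k+1}²)P_{k-1}, and moreover ¼ − ρ_{k+1}²δ_k ≥ 0 and 1 + ρ_k − ρ_{k+1}² ≥ 0. -/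
open scoped RealInnerProductSpace
open Filter

noncomputable section

/-! The prox steps producing `x^k` and `x^{k+1}` are subgradient inequalities for `g`; together
with the gradient inequality of `f` at `x^k` they bound `½‖x^{k+1} - x*‖²` by
`½‖x^k - x*‖² - ½‖x^{k+1} - x^k‖² - γ_{k+1} P_k + ρ_{k+1} ⟪v, x^k - x^{k+1}⟫`, where
`v = x^{k-1} - x^k - γ_k (∇f(x^{k-1}) - ∇f(x^k))`. Young's inequality turns the cross term into
`¼‖x^k - x^{k+1}‖² + ρ_{k+1}² ‖v‖²`, and
`‖v‖² = δ_k ‖x^{k-1} - x^k‖² + (‖x^{k-1} - x^k‖² - γ_k ⟪∇f(x^{k-1}) - ∇f(x^k), x^{k-1} - x^k⟫)`,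
whose last summand is at most `γ_k (φ(x^{k-1}) - φ(x^k))` by the prox step producing `x^k`.
The two sign conditions are exactly the two caps of the stepsize rule. -/

open Topology

section Gradient

variable {E : Type*} [NormedAddCommGroup E] [InnerProductSpace ℝ E] [CompleteSpace E]
  {f : E → ℝ} {f' : E → E}

theorem ConvexOn.add_inner_le_of_hasGradientAt (hf : ConvexOn ℝ Set.univ f)
    (hgrad : ∀ z, HasGradientAt f (f' z) z) (z w : E) : f z + ⟪f' z, w - z⟫ ≤ f w := by
  have hd : HasDerivAt (f ∘ AffineMap.lineMap (k := ℝ) z w) ⟪f' z, w - z⟫ 0 := by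
    have hz := (hgrad z).hasFDerivAt
    rw [← AffineMap.lineMap_apply_zero (k := ℝ) z w] at hz
    simpa only [AffineMap.lineMap_apply_zero, InnerProductSpace.toDual_apply_apply] using
      hz.comp_hasDerivAt (0 : ℝ) AffineMap.hasDerivAt_lineMap
  have := (hf.comp_affineMap (AffineMap.lineMap (k := ℝ) z w)).le_slope_of_hasDerivAt
    (Set.mem_univ 0) (Set.mem_univ 1) one_pos hd
  simp only [slope_def_field, Function.comp_apply, AffineMap.lineMap_apply_one,
    AffineMap.lineMap_apply_zero, sub_zero, div_one] at this
  linarith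

theorem ConvexOn.gradient_eq_of_inner_sub_nonpos (hf : ConvexOn ℝ Set.univ f)
    (hgrad : ∀ z, HasGradientAt f (f' z) z) {y z : E} (h : ⟪f' y - f' z, y - z⟫ ≤ 0) :
    f' y = f' z := by
  have hzy := hf.add_inner_le_of_hasGradientAt hgrad z y
  have hyz := hf.add_inner_le_of_hasGradientAt hgrad y z
  -- the tilted function `w ↦ f w - ⟪f' z, w⟫` attains its minimum at `y`
  have hmin : IsLocalMin (fun w => f w - ⟪f' z, w⟫) y := Eventually.of_forall fun w => by
    have hzw := hf.add_inner_le_of_hasGradientAt hgrad z w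
    simp only [inner_sub_left, inner_sub_right] at h hzy hyz hzw ⊢
    linarith
  have hzero := hmin.hasFDerivAt_eq_zero ((hgrad y).hasFDerivAt.sub (innerSL ℝ (f' z)).hasFDerivAt)
  have : ⟪f' y - f' z, f' y - f' z⟫ = 0 := by
    have := congrArg (fun L => L (f' y - f' z)) hzero
    simp only [sub_apply, InnerProductSpace.toDual_apply_apply,
      coe_innerSL_apply, zero_apply] at this
    rwa [inner_sub_left]
  exact sub_eq_zero.1 (inner_self_eq_zero.1 this)

end Gradient

namespace ProperLscConvex

variable {n : ℕ} {g : En n → EReal}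

theorem coe_toReal (hg : ProperLscConvex g) {x : En n} (hx : g x ≠ ⊤) :
    (((g x).toReal : ℝ) : EReal) = g x :=
  EReal.coe_toReal hx (hg.1 x)

theorem convexOn_toReal (hg : ProperLscConvex g) :
    ConvexOn ℝ {x | g x ≠ ⊤} fun x => (g x).toReal := by
  have key : ∀ ⦃x⦄, g x ≠ ⊤ → ∀ ⦃y⦄, g y ≠ ⊤ → ∀ ⦃a b : ℝ⦄, 0 ≤ a → 0 ≤ b → a + b = 1 →
      g (a • x + b • y) ≤ ((a * (g x).toReal + b * (g y).toReal : ℝ) : EReal) := by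
    intro x hx y hy a b ha hb hab
    have := hg.2.2.2 x y a b ha hb hab
    rwa [← hg.coe_toReal hx, ← hg.coe_toReal hy, ← EReal.coe_mul, ← EReal.coe_mul,
      ← EReal.coe_add] at this
  refine ⟨fun x hx y hy a b ha hb hab => ?_, fun x hx y hy a b ha hb hab => ?_⟩
  · exact ne_top_of_le_ne_top (EReal.coe_ne_top _) (key hx hy ha hb hab)
  · have hxy := key hx hy ha hb hab
    rw [← hg.coe_toReal (ne_top_of_le_ne_top (EReal.coe_ne_top _) hxy)] at hxy
    exact_mod_cast hxy

theorem ne_top_of_forall_le (hg : ProperLscConvex g) {f : En n → ℝ} {xs : En n}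
    (hxs : ∀ w, (f xs : EReal) + g xs ≤ (f w : EReal) + g w) : g xs ≠ ⊤ := by
  obtain ⟨w, hw⟩ := hg.2.1
  intro htop
  have := hxs w
  rw [htop, EReal.coe_add_top, top_le_iff] at this
  exact (EReal.add_lt_top (EReal.coe_ne_top _) hw).ne this

end ProperLscConvex

namespace IsProx

variable {n : ℕ} {g : En n → EReal} {γ : ℝ} {u p : En n}

theorem ne_top_s4 (hg : ProperLscConvex g) (hp : IsProx γ g u p) : g p ≠ ⊤ := by
  obtain ⟨w, hw⟩ := hg.2.1
  intro htop
  have := hp w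
  rw [htop, EReal.top_add_coe, top_le_iff] at this
  exact (EReal.add_lt_top hw (EReal.coe_ne_top _)).ne this

theorem toReal_add_le (hg : ProperLscConvex g) (hp : IsProx γ g u p) {w : En n}
    (hw : g w ≠ ⊤) :
    (g p).toReal + ‖p - u‖ ^ 2 / (2 * γ) ≤ (g w).toReal + ‖w - u‖ ^ 2 / (2 * γ) := by
  have := hp w
  rw [← hg.coe_toReal (hp.ne_top_s4 hg), ← hg.coe_toReal hw] at this
  exact_mod_cast this

theorem inner_le (hg : ProperLscConvex g) (hγ : 0 < γ) (hp : IsProx γ g u p) {w : En n}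
    (hw : g w ≠ ⊤) : ⟪u - p, w - p⟫ ≤ γ * ((g w).toReal - (g p).toReal) := by
  set G := fun z => (g z).toReal
  have hpdom : g p ≠ ⊤ := hp.ne_top_s4 hg
  -- compare `p` with the points `p + t (w - p)` of the segment, then let `t → 0⁺`
  have hsegment : ∀ t ∈ Set.Ioc (0 : ℝ) 1,
      ⟪u - p, w - p⟫ ≤ γ * (G w - G p) + t * (‖w - p‖ ^ 2 / 2) := by
    rintro t ⟨ht0, ht1⟩
    have hconv := hg.convexOn_toReal
    have hq : (1 - t) • p + t • w = p + t • (w - p) := by module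
    have hqdom := hconv.1 hpdom hw (sub_nonneg.2 ht1) ht0.le (sub_add_cancel 1 t)
    have hGq := hconv.2 hpdom hw (sub_nonneg.2 ht1) ht0.le (sub_add_cancel 1 t)
    have hmin := hp.toReal_add_le hg hqdom
    simp only [hq, smul_eq_mul] at hGq hmin
    have hnorm : ‖p + t • (w - p) - u‖ ^ 2
        = ‖p - u‖ ^ 2 - 2 * t * ⟪u - p, w - p⟫ + t ^ 2 * ‖w - p‖ ^ 2 := by
      rw [show p + t • (w - p) - u = (p - u) + t • (w - p) by abel, norm_add_sq_real,
        real_inner_smul_right, norm_smul, Real.norm_of_nonneg ht0.le, ← neg_sub u p,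
        inner_neg_left]
      ring
    have h2γ : 0 < 2 * γ := by positivity
    have hmin' := mul_le_mul_of_nonneg_left hmin h2γ.le
    rw [hnorm, mul_add, mul_add, mul_div_cancel₀ _ h2γ.ne', mul_div_cancel₀ _ h2γ.ne'] at hmin'
    refine le_of_mul_le_mul_left ?_ ht0
    nlinarith [mul_le_mul_of_nonneg_left hGq h2γ.le]
  have hlim : Tendsto (fun t => γ * (G w - G p) + t * (‖w - p‖ ^ 2 / 2)) (𝓝[>] 0)
      (𝓝 (γ * (G w - G p))) := by
    refine tendsto_nhdsWithin_of_tendsto_nhds ?_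
    exact ((continuous_mul_const _).const_add _).tendsto' 0 _ (by simp)
  exact ge_of_tendsto hlim (eventually_of_mem (Ioc_mem_nhdsGT zero_lt_one) hsegment)

end IsProx

theorem adaStep_nonneg (ρ δ : ℝ) : 0 ≤ adaStep ρ δ := by
  unfold adaStep
  split_ifs
  · exact Real.sqrt_nonneg _
  · exact le_min (Real.sqrt_nonneg _) (by positivity)

theorem adaStep_pos {ρ : ℝ} (δ : ℝ) (hρ : 0 < 1 + ρ) : 0 < adaStep ρ δ := by
  unfold adaStep
  split_ifs with hδ
  · exact Real.sqrt_pos.2 hρ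
  · exact lt_min (Real.sqrt_pos.2 hρ) (by have := Real.sqrt_pos.2 (not_le.1 hδ); positivity)

theorem adaStep_sq_le {ρ : ℝ} (δ : ℝ) (hρ : 0 ≤ 1 + ρ) : adaStep ρ δ ^ 2 ≤ 1 + ρ := by
  have h : adaStep ρ δ ≤ Real.sqrt (1 + ρ) := by
    unfold adaStep
    split_ifs
    exacts [le_rfl, min_le_left _ _]
  calc adaStep ρ δ ^ 2 ≤ Real.sqrt (1 + ρ) ^ 2 := pow_le_pow_left₀ (adaStep_nonneg ρ δ) h 2
    _ = 1 + ρ := Real.sq_sqrt hρ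

theorem adaStep_sq_mul_le (ρ δ : ℝ) : adaStep ρ δ ^ 2 * δ ≤ 1 / 4 := by
  rcases le_or_gt δ 0 with hδ | hδ
  · exact (mul_nonpos_of_nonneg_of_nonpos (sq_nonneg _) hδ).trans (by norm_num)
  have h : adaStep ρ δ ≤ 1 / (2 * Real.sqrt δ) := by
    unfold adaStep
    rw [if_neg hδ.not_ge]
    exact min_le_right _ _
  have hsqrt := Real.sqrt_pos.2 hδ
  calc adaStep ρ δ ^ 2 * δ ≤ (1 / (2 * Real.sqrt δ)) ^ 2 * δ := by
        gcongr
        exact adaStep_nonneg ρ δ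
    _ = 1 / 4 := by
        field_simp
        rw [Real.sq_sqrt hδ.le]
        ring

theorem deltaEst_mul_norm_sq {n : ℕ} {f : En n → ℝ} {f' : En n → En n}
    (hf : ConvexOn ℝ Set.univ f) (hgrad : ∀ z, HasGradientAt f (f' z) z) (γ : ℝ) (a b : En n) :
    deltaEst γ f' a b * ‖a - b‖ ^ 2
      = γ ^ 2 * ‖f' a - f' b‖ ^ 2 - γ * ⟪f' a - f' b, a - b⟫ := by
  -- under `0/0 = 0` the identity needs `f' a = f' b` whenever `⟪f' a - f' b, a - b⟫` vanishes
  rcases le_or_gt ⟪f' a - f' b, a - b⟫ 0 with hle | hpos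
  · simp [deltaEst, lEst, cEst, hf.gradient_eq_of_inner_sub_nonpos hgrad hle]
  have hab : ‖a - b‖ ≠ 0 := by
    rintro h
    simp [norm_eq_zero.1 h] at hpos
  unfold deltaEst lEst cEst
  field_simp

theorem adaPGM_stepsize_pos {γ δ : ℕ → ℝ} (hγ0 : 0 < γ 0) (hγ01 : γ 0 ≤ γ 1)
    (hrule : ∀ k, γ (k+2) = γ (k+1) * adaStep (γ (k+1) / γ k) (δ k)) (k : ℕ) : 0 < γ k := by
  suffices ∀ k, 0 < γ k ∧ 0 < γ (k+1) from (this k).1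
  intro k
  induction k with
  | zero => exact ⟨hγ0, hγ0.trans_le hγ01⟩
  | succ k ih =>
    refine ⟨ih.2, ?_⟩
    rw [hrule k]
    exact mul_pos ih.2 (adaStep_pos _ (add_pos one_pos (div_pos ih.2 ih.1)))

section Descent

variable {n : ℕ} {f : En n → ℝ} {f' : En n → En n} {g : En n → EReal}

theorem proxGrad_norm_sq_sub_inner_le (hf : ConvexOn ℝ Set.univ f)
    (hgrad : ∀ z, HasGradientAt f (f' z) z) (hg : ProperLscConvex g) {γ : ℝ} (hγ : 0 < γ)
    {xm x : En n} (hx : IsProx γ g (xm - γ • f' xm) x) (hxm : g xm ≠ ⊤) :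
    ‖xm - x‖ ^ 2 - γ * ⟪f' xm - f' x, xm - x⟫ ≤ γ * (phiR f g xm - phiR f g x) := by
  have hprox := hx.inner_le hg hγ hxm
  have hgrad_x := hf.add_inner_le_of_hasGradientAt hgrad x xm
  unfold phiR
  simp only [inner_sub_left, inner_sub_right, real_inner_smul_right, ← real_inner_self_eq_norm_sq,
    real_inner_comm] at hprox hgrad_x ⊢
  linear_combination hprox + γ * hgrad_x

theorem proxGrad_half_norm_sq_le (hf : ConvexOn ℝ Set.univ f)
    (hgrad : ∀ z, HasGradientAt f (f' z) z) (hg : ProperLscConvex g) {γ γ' : ℝ} (hγ : 0 < γ)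
    (hγ' : 0 < γ') {xm x x' xs : En n} (hx : IsProx γ g (xm - γ • f' xm) x)
    (hx' : IsProx γ' g (x - γ' • f' x) x') (hxs : g xs ≠ ⊤) :
    1/2 * ‖x' - xs‖ ^ 2 ≤ 1/2 * ‖x - xs‖ ^ 2 - 1/2 * ‖x' - x‖ ^ 2
      - γ' * (phiR f g x - phiR f g xs)
      + γ' / γ * ⟪(xm - x) - γ • (f' xm - f' x), x - x'⟫ := by
  have hprox' := hx'.inner_le hg hγ' hxs
  have hgrad_x := hf.add_inner_le_of_hasGradientAt hgrad x xs
  have hprox := hx.inner_le hg hγ (hx'.ne_top_s4 hg)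
  obtain ⟨ρ, hρ, rfl⟩ : ∃ ρ, 0 < ρ ∧ γ' = ρ * γ := ⟨γ' / γ, by positivity, by field_simp⟩
  rw [mul_div_cancel_right₀ _ hγ.ne']
  unfold phiR
  simp only [inner_sub_left, inner_sub_right, real_inner_smul_right,
    ← real_inner_self_eq_norm_sq, real_inner_comm] at hprox' hgrad_x hprox ⊢
  linear_combination hprox' + ρ * γ * hgrad_x + ρ * hprox

theorem proxGrad_lyapunov_le (hf : ConvexOn ℝ Set.univ f)
    (hgrad : ∀ z, HasGradientAt f (f' z) z) (hg : ProperLscConvex g) {γ γ' : ℝ} (hγ : 0 < γ)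
    (hγ' : 0 < γ') {xm x x' xs : En n} (hx : IsProx γ g (xm - γ • f' xm) x)
    (hx' : IsProx γ' g (x - γ' • f' x) x') (hxm : g xm ≠ ⊤) (hxs : g xs ≠ ⊤) :
    1/2 * ‖x' - xs‖ ^ 2 + 1/4 * ‖x' - x‖ ^ 2 + γ' * (1 + γ' / γ) * Pval f g xs x
      ≤ 1/2 * ‖x - xs‖ ^ 2 + (γ' / γ) ^ 2 * deltaEst γ f' xm x * ‖xm - x‖ ^ 2
        + γ * (γ' / γ) ^ 2 * Pval f g xs xm := by
  have hdist := proxGrad_half_norm_sq_le hf hgrad hg hγ hγ' hx hx' hxs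
  obtain ⟨ρ, hρ, rfl⟩ : ∃ ρ, 0 ≤ ρ ∧ γ' = ρ * γ := ⟨γ' / γ, by positivity, by field_simp⟩
  rw [mul_div_cancel_right₀ _ hγ.ne'] at hdist ⊢
  set v := (xm - x) - γ • (f' xm - f' x)
  have hyoung : ρ * ⟪v, x - x'⟫ ≤ ρ ^ 2 * ‖v‖ ^ 2 + 1/4 * ‖x' - x‖ ^ 2 := by
    rw [norm_sub_rev x' x]
    nlinarith [mul_le_mul_of_nonneg_left (real_inner_le_norm v (x - x')) hρ,
      sq_nonneg (ρ * ‖v‖ - ‖x - x'‖ / 2)]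
  have hv : ‖v‖ ^ 2 = deltaEst γ f' xm x * ‖xm - x‖ ^ 2
      + (‖xm - x‖ ^ 2 - γ * ⟪f' xm - f' x, xm - x⟫) := by
    rw [deltaEst_mul_norm_sq hf hgrad, norm_sub_sq_real, norm_smul, real_inner_smul_right,
      Real.norm_eq_abs, mul_pow, sq_abs, real_inner_comm]
    ring
  have hdescent := proxGrad_norm_sq_sub_inner_le hf hgrad hg hγ hx hxm
  unfold Pval
  linear_combination hdist + hyoung + ρ ^ 2 * hdescent + ρ ^ 2 * hv

end Descent

/-- Indexing is shifted by one: Lean `x (k+1)`, `γ (k+1)` are the paper `x^k`, `γ_k`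
(so `x 0 = x^{-1}` and `γ 0 = γ₋₁`). -/
theorem adaPGM_sufficient_descent_general {n : ℕ}
    (f : En n → ℝ) (f' : En n → En n) (g : En n → EReal)
    (hconv : ConvexOn ℝ Set.univ f)
    (hgrad : ∀ z, HasGradientAt f (f' z) z)
    (hg : ProperLscConvex g)
    (x : ℕ → En n) (γ : ℕ → ℝ)
    (hγ0 : 0 < γ 0) (hγ01 : γ 0 ≤ γ 1)
    (hstep : ∀ k, IsProx (γ (k+1)) g (x k - γ (k+1) • f' (x k)) (x (k+1)))
    (hrule : ∀ k, γ (k+2)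
      = γ (k+1) * adaStep (γ (k+1) / γ k) (deltaEst (γ (k+1)) f' (x k) (x (k+1))))
    (xs : En n) (hxs : ∀ w, (f xs : EReal) + g xs ≤ (f w : EReal) + g w)
    (k : ℕ) (hk : 1 ≤ k) :
    (Ufun f g xs x γ (k+1)
      ≤ Ufun f g xs x γ k
        - (1/4 - (γ (k+2) / γ (k+1)) ^ 2 * deltaEst (γ (k+1)) f' (x k) (x (k+1)))
            * ‖x k - x (k+1)‖ ^ 2
        - γ (k+1) * (1 + γ (k+1) / γ k - (γ (k+2) / γ (k+1)) ^ 2) * Pval f g xs (x k))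
    ∧ 0 ≤ 1/4 - (γ (k+2) / γ (k+1)) ^ 2 * deltaEst (γ (k+1)) f' (x k) (x (k+1))
    ∧ 0 ≤ 1 + γ (k+1) / γ k - (γ (k+2) / γ (k+1)) ^ 2 := by
  have hγ := adaPGM_stepsize_pos hγ0 hγ01 hrule
  have hxk : g (x k) ≠ ⊤ := by
    obtain ⟨m, rfl⟩ : ∃ m, k = m + 1 := ⟨k - 1, by omega⟩
    exact (hstep m).ne_top_s4 hg
  have hρ : γ (k+2) / γ (k+1)
      = adaStep (γ (k+1) / γ k) (deltaEst (γ (k+1)) f' (x k) (x (k+1))) := by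
    rw [hrule k, mul_div_cancel_left₀ _ (hγ _).ne']
  refine ⟨?_, ?_, ?_⟩
  · have := proxGrad_lyapunov_le hconv hgrad hg (hγ (k+1)) (hγ (k+2)) (hstep k) (hstep (k+1))
      hxk (hg.ne_top_of_forall_le hxs)
    simp only [Ufun, show k + 1 + 1 = k + 2 from rfl] at this ⊢
    rw [norm_sub_rev (x (k+1)) (x k)]
    linarith
  · rw [hρ]
    exact sub_nonneg.2 (adaStep_sq_mul_le _ _)
  · rw [hρ]
    exact sub_nonneg.2 (adaStep_sq_le _ (add_pos one_pos (div_pos (hγ (k+1)) (hγ k))).le)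

/-- sufficient-descent inequality for adaPGM.
Indexing is shifted by one: Lean `x (k+1)`, `γ (k+1)` are the paper `x^k`, `γ_k`
(so `x 0 = x^{-1}` and `γ 0 = γ₋₁`). -/
theorem adaPGM_sufficient_descent {n : ℕ}
    (f : En n → ℝ) (f' : En n → En n) (g : En n → EReal)
    (hconv : ConvexOn ℝ Set.univ f)
    (hgrad : ∀ z, HasGradientAt f (f' z) z)
    (hlip : LocallyLipschitz f')
    (hg : ProperLscConvex g)
    (hargmin : ∃ z, ∀ w, (f z : EReal) + g z ≤ (f w : EReal) + g w)
    (x : ℕ → En n) (γ : ℕ → ℝ)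
    (hγ0 : 0 < γ 0) (hγ01 : γ 0 ≤ γ 1)
    (hstep : ∀ k, IsProx (γ (k+1)) g (x k - γ (k+1) • f' (x k)) (x (k+1)))
    (hrule : ∀ k, γ (k+2)
      = γ (k+1) * adaStep (γ (k+1) / γ k) (deltaEst (γ (k+1)) f' (x k) (x (k+1))))
    (xs : En n) (hxs : ∀ w, (f xs : EReal) + g xs ≤ (f w : EReal) + g w)
    (k : ℕ) (hk : 1 ≤ k) :
    (Ufun f g xs x γ (k+1)
      ≤ Ufun f g xs x γ k
        - (1/4 - (γ (k+2) / γ (k+1)) ^ 2 * deltaEst (γ (k+1)) f' (x k) (x (k+1)))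
            * ‖x k - x (k+1)‖ ^ 2
        - γ (k+1) * (1 + γ (k+1) / γ k - (γ (k+2) / γ (k+1)) ^ 2) * Pval f g xs (x k))
    ∧ 0 ≤ 1/4 - (γ (k+2) / γ (k+1)) ^ 2 * deltaEst (γ (k+1)) f' (x k) (x (k+1))
    ∧ 0 ≤ 1 + γ (k+1) / γ k - (γ (k+2) / γ (k+1)) ^ 2 :=
  adaPGM_sufficient_descent_general f f' g hconv hgrad hg x γ hγ0 hγ01 hstep hrule xs hxs k hk
end
end

section
/- Let f : ℝⁿ → ℝ be convex and differentiable with locally Lipschitz continuous gradient, let x^{k-1}, x^k ∈ ℝⁿ, and let γ_k, γ_{k-1} > 0. With ℓ_k, c_k, δ_k defined from ∇f at x^{k-1}, x^k and L_k = ‖∇f(x^{k-1}) − ∇f(x^k)‖ / ‖x^{k-1} − x^k‖, the adaPGM stepsize dominates the Malitsky–Mishchenko stepsize: γ_k · min{ √(1 + γ_k/γ_{k-1}), 1/(2√([δ_k]₊)) } ≥ min{ γ_k√(1 + γ_k/γ_{k-1}), 1/(2L_k) }, where both minima use the convention 1/0 = +∞. -/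
open scoped RealInnerProductSpace
open Filter

noncomputable section

lemma grad_mono {n : ℕ} (f : En n → ℝ) (f' : En n → En n)
    (hconv : ConvexOn ℝ Set.univ f)
    (hgrad : ∀ z, HasGradientAt f (f' z) z)
    (a b : En n) : 0 ≤ ⟪f' a - f' b, a - b⟫ := by
  set L : ℝ →ᵃ[ℝ] En n := AffineMap.lineMap a b with hL
  have hg : ConvexOn ℝ Set.univ (f ∘ L) := by
    have := hconv.comp_affineMap L
    simpa using this
  have hd : ∀ t : ℝ, HasDerivAt (f ∘ L) ⟪f' (L t), b - a⟫ t := by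
    intro t
    have hline : HasDerivAt (fun t : ℝ => L t) (b - a) t := by
      have : (fun t : ℝ => L t) = fun t : ℝ => t • (b - a) + a := by
        funext s
        simp [hL, AffineMap.lineMap_apply_module]
        module
      rw [this]
      simpa using ((hasDerivAt_id t).smul_const (b - a)).add_const a
    have hf := (hgrad (L t)).hasFDerivAt
    have := hf.comp_hasDerivAt t hline
    simpa [InnerProductSpace.toDual_apply_apply, real_inner_comm] using this
  have h0 : ⟪f' (L 0), b - a⟫ ≤ slope (f ∘ L) 0 1 :=
    hg.le_slope_of_hasDerivAt trivial trivial one_pos (hd 0)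
  have h1 : slope (f ∘ L) 0 1 ≤ ⟪f' (L 1), b - a⟫ :=
    hg.slope_le_of_hasDerivAt trivial trivial one_pos (hd 1)
  have hkey : ⟪f' a, b - a⟫ ≤ ⟪f' b, b - a⟫ := by
    have e0 : L 0 = a := by simp [hL]
    have e1 : L 1 = b := by simp [hL]
    rw [e0] at h0; rw [e1] at h1
    exact h0.trans h1
  have : ⟪f' a - f' b, a - b⟫ = ⟪f' b, b - a⟫ - ⟪f' a, b - a⟫ := by
    rw [inner_sub_left]
    rw [show (a - b : En n) = -(b - a) by abel, inner_neg_right, inner_neg_right]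
    ring
  linarith

/-- the adaPGM stepsize dominates the Malitsky–Mishchenko stepsize:
`γ_k min{√(1+γ_k/γ_{k-1}), 1/(2√([δ_k]₊))} ≥ min{γ_k√(1+γ_k/γ_{k-1}), 1/(2L_k)}`,
both minima with the convention `1/0 = +∞`. -/
theorem adaPGM_step_dominates_MM_step {n : ℕ}
    (f : En n → ℝ) (f' : En n → En n)
    (hconv : ConvexOn ℝ Set.univ f)
    (hgrad : ∀ z, HasGradientAt f (f' z) z)
    (hlip : LocallyLipschitz f')
    (a b : En n) (γk γkm1 : ℝ) (hγk : 0 < γk) (hγkm1 : 0 < γkm1) :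
    mmStep γkm1 γk (‖f' a - f' b‖ / ‖a - b‖)
      ≤ γk * adaStep (γk / γkm1) (deltaEst γk f' a b) := by
  have hI : 0 ≤ ⟪f' a - f' b, a - b⟫ := grad_mono f f' hconv hgrad a b
  set I : ℝ := ⟪f' a - f' b, a - b⟫ with hIdef
  set G : ℝ := ‖f' a - f' b‖ with hG
  set D : ℝ := ‖a - b‖ with hD
  set Lk : ℝ := G / D with hLk
  set ρ : ℝ := γk / γkm1 with hρ
  have hρ0 : 0 < 1 + ρ := by positivity
  have hs : 0 ≤ γk * Real.sqrt (1 + ρ) := by positivity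
  have hmm_le : mmStep γkm1 γk Lk ≤ γk * Real.sqrt (1 + ρ) := by
    unfold mmStep
    split
    · rw [hρ]
    · rw [hρ]; exact min_le_left _ _
  by_cases hδ : deltaEst γk f' a b ≤ 0
  · rw [adaStep, if_pos hδ]
    exact hmm_le
  · push_neg at hδ
    rw [adaStep, if_neg (not_le.2 hδ)]
    -- from δ > 0 deduce ℓ > 0 and γc - 1 > 0
    have hℓ0 : 0 ≤ lEst f' a b := by
      unfold lEst; positivity
    have hℓpos : 0 < lEst f' a b := by
      rcases hℓ0.lt_or_eq with h | h
      · exact h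
      · exfalso
        have : deltaEst γk f' a b = 0 := by unfold deltaEst; rw [← h]; ring
        linarith
    have hIpos : 0 < I := by
      have := hℓpos
      unfold lEst at this
      by_contra h
      push_neg at h
      have hD2 : (0:ℝ) ≤ D ^ 2 := sq_nonneg D
      have : I / D ^ 2 ≤ 0 := div_nonpos_of_nonpos_of_nonneg h hD2
      linarith [hℓpos, this]
    have hDpos : 0 < D := by
      by_contra h
      push_neg at h
      have : D = 0 := le_antisymm h (norm_nonneg _)
      have : a - b = 0 := by rwa [hD, norm_eq_zero] at this
      have : I = 0 := by rw [hIdef, this, inner_zero_right]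
      linarith
    have hGpos : 0 < G := by
      by_contra h
      push_neg at h
      have : G = 0 := le_antisymm h (norm_nonneg _)
      have : f' a - f' b = 0 := by rwa [hG, norm_eq_zero] at this
      have : I = 0 := by rw [hIdef, this, inner_zero_left]
      linarith
    have hLpos : 0 < Lk := div_pos hGpos hDpos
    have hLne : Lk ≠ 0 := ne_of_gt hLpos
    have hlc : lEst f' a b * cEst f' a b = Lk ^ 2 := by
      show (I / D ^ 2) * (G ^ 2 / I) = Lk ^ 2
      rw [hLk]
      field_simp
    have hδle : deltaEst γk f' a b ≤ γk ^ 2 * Lk ^ 2 := by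
      have : deltaEst γk f' a b
          = γk ^ 2 * (lEst f' a b * cEst f' a b) - γk * lEst f' a b := by
        unfold deltaEst; ring
      rw [this, hlc]
      nlinarith [mul_pos hγk hℓpos]
    have hsqrt : Real.sqrt (deltaEst γk f' a b) ≤ γk * Lk := by
      have h1 : Real.sqrt (deltaEst γk f' a b) ≤ Real.sqrt (γk ^ 2 * Lk ^ 2) :=
        Real.sqrt_le_sqrt hδle
      have h2 : Real.sqrt (γk ^ 2 * Lk ^ 2) = γk * Lk := by
        rw [show γk ^ 2 * Lk ^ 2 = (γk * Lk) ^ 2 by ring,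
          Real.sqrt_sq (by positivity)]
      linarith
    have hsqδ : 0 < Real.sqrt (deltaEst γk f' a b) := Real.sqrt_pos.2 hδ
    have hinv : 1 / (2 * Lk) ≤ γk * (1 / (2 * Real.sqrt (deltaEst γk f' a b))) := by
      rw [mul_one_div]
      rw [div_le_div_iff₀ (by positivity) (by positivity)]
      nlinarith
    rw [mul_min_of_nonneg _ _ hγk.le]
    rw [mmStep, if_neg hLne, hρ]
    exact min_le_min (le_refl _) hinv
end
end

section
/- Let (γ_k)_{k ≥ −1} be a sequence of strictly positive reals satisfying γ_{k+1} ≤ γ_k√(1 + γ_k/γ_{k-1}) for all k ≥ 0. Then γ_{k+1}/γ_k ≤ max{ γ₀/γ₋₁, (1+√5)/2 } for every k ≥ 0. -/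
/-!
The ratios `r k = γ (k+1) / γ k` satisfy `r (k+1) ≤ √(1 + r k)`. Since `φ` is the positive root of
`x² = x + 1`, every `M ≥ φ` satisfies `M² ≥ M + 1`, i.e. `√(1 + M) ≤ M`; so `M = max (r 0) φ`
bounds all the ratios by induction.
-/

open Real goldenRatio

theorem sqrt_one_add_le_self_of_goldenRatio_le {M : ℝ} (hM : φ ≤ M) : √(1 + M) ≤ M := by
  have hφ : 1 < φ := one_lt_goldenRatio
  rw [sqrt_le_iff]
  constructor
  · linarith
  · nlinarith [goldenRatio_sq]

theorem forall_le_of_le_sqrt_one_add {r : ℕ → ℝ} {M : ℝ} (hM : φ ≤ M) (h0 : r 0 ≤ M)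
    (hr : ∀ k, r (k + 1) ≤ √(1 + r k)) : ∀ k, r k ≤ M
  | 0 => h0
  | k + 1 => calc
      r (k + 1) ≤ √(1 + r k) := hr k
      _ ≤ √(1 + M) := by gcongr; exact forall_le_of_le_sqrt_one_add hM h0 hr k
      _ ≤ M := sqrt_one_add_le_self_of_goldenRatio_le hM

/-- bound on the stepsize ratios. Indexing is shifted by one:
Lean `γ (k+1)` is the paper `γ_k` (so `γ 0 = γ₋₁`). If `γ_{k+1} ≤ γ_k√(1 + γ_k/γ_{k-1})`
for all `k ≥ 0`, then `γ_{k+1}/γ_k ≤ max{γ₀/γ₋₁, (1+√5)/2}` for all `k ≥ 0`. -/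
theorem stepsize_ratio_bound (γ : ℕ → ℝ) (hγpos : ∀ k, 0 < γ k)
    (hrec : ∀ k, γ (k+2) ≤ γ (k+1) * Real.sqrt (1 + γ (k+1) / γ k)) :
    ∀ k, γ (k+2) / γ (k+1) ≤ max (γ 1 / γ 0) ((1 + Real.sqrt 5) / 2) := by
  have hratio : ∀ k, γ (k + 2) / γ (k + 1) ≤ √(1 + γ (k + 1) / γ k) := fun k =>
    div_le_of_le_mul₀ (hγpos _).le (sqrt_nonneg _) (by rw [mul_comm]; exact hrec k)
  intro k
  exact forall_le_of_le_sqrt_one_add (r := fun k => γ (k + 1) / γ k)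
    (le_max_right _ _) (le_max_left _ _) hratio (k + 1)
end
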